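/- arXiv:1805.07823 — 2 statements merged into one kernel-verified Lean document; each statement's English description precedes it below -/
import Mathlib

section
/- A trajectory of a linear system ẋ = Ax remains in a subspace V for all t ≥ 0 if and only if its initial condition lies in the maximal A-invariant subspace V* contained in V. -/
/-!
If the trajectory of `x₀` stays in `V`, so does the trajectory of `A x₀`: it is the derivative of
the trajectory of `x₀`, a limit of difference quotients of points of the closed subspace `V`.
Hence the initial conditions whose trajectories stay in `V` form an `A`-invariant subspace of `V`,
which lies in `V*` by maximality. Conversely, the matrices mapping `V*` into itself form a closed
subalgebra containing `t • A`, so it contains `exp (t • A)`.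
-/

open Matrix Set

theorem HasDerivWithinAt.mem_of_forall_le_mem {E : Type*} [NormedAddCommGroup E]
    [NormedSpace ℝ E] {f : ℝ → E} {f' : E} {t : ℝ} {V : Submodule ℝ E}
    (hV : IsClosed (V : Set E)) (hf : HasDerivWithinAt f f' (Ioi t) t)
    (hmem : ∀ s, t ≤ s → f s ∈ V) : f' ∈ V := by
  refine hV.mem_of_tendsto ((hasDerivWithinAt_iff_tendsto_slope' self_notMem_Ioi).1 hf) ?_
  filter_upwards [self_mem_nhdsWithin] with s hs
  exact V.smul_mem _ (V.sub_mem (hmem s hs.le) (hmem t le_rfl))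

namespace Matrix

variable {ι : Type*} [Fintype ι] [DecidableEq ι]

section Stabilizer

variable {R : Type*} [CommRing R]

def stabilizer (W : Submodule R (ι → R)) : Subalgebra R (Matrix ι ι R) where
  carrier := {M | ∀ x ∈ W, M *ᵥ x ∈ W}
  mul_mem' hM hN x hx := by rw [← mulVec_mulVec]; exact hM _ (hN x hx)
  add_mem' hM hN x hx := by rw [add_mulVec]; exact W.add_mem (hM x hx) (hN x hx)
  algebraMap_mem' r x hx := by
    rw [Algebra.algebraMap_eq_smul_one, smul_mulVec, one_mulVec]
    exact W.smul_mem r hx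

variable [TopologicalSpace R] [IsTopologicalRing R]

theorem isClosed_stabilizer {W : Submodule R (ι → R)} (hW : IsClosed (W : Set (ι → R))) :
    IsClosed (stabilizer W : Set (Matrix ι ι R)) := by
  change IsClosed {M : Matrix ι ι R | ∀ x ∈ W, M *ᵥ x ∈ W}
  simp only [ofPred_forall]
  exact isClosed_biInter fun x _ => hW.preimage (continuous_id.matrix_mulVec continuous_const)

theorem exp_mulVec_mem [Algebra ℚ R] {W : Submodule R (ι → R)} (hW : IsClosed (W : Set (ι → R)))
    {M : Matrix ι ι R} (hM : ∀ x ∈ W, M *ᵥ x ∈ W) {x : ι → R} (hx : x ∈ W) :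
    NormedSpace.exp M *ᵥ x ∈ W :=
  NormedSpace.exp_mem (R := R) (s := stabilizer W) (isClosed_stabilizer hW) hM x hx

end Stabilizer

theorem hasDerivAt_exp_smul_mulVec (A : Matrix ι ι ℝ) (y : ι → ℝ) (t : ℝ) :
    HasDerivAt (fun s : ℝ => NormedSpace.exp (s • A) *ᵥ y)
      (NormedSpace.exp (t • A) *ᵥ (A *ᵥ y)) t := by
  -- `exp` only depends on the topology, so any norm inducing it will do.
  let : NormedRing (Matrix ι ι ℝ) := Matrix.linftyOpNormedRing
  let : NormedAlgebra ℝ (Matrix ι ι ℝ) := Matrix.linftyOpNormedAlgebra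
  rw [mulVec_mulVec]
  exact (LinearMap.toContinuousLinearMap ((mulVecBilin ℝ ℝ).flip y)).hasFDerivAt.comp_hasDerivAt t
    (hasDerivAt_exp_smul_const A t)

def viabilityKernel (A : Matrix ι ι ℝ) (V : Submodule ℝ (ι → ℝ)) : Submodule ℝ (ι → ℝ) where
  carrier := {y | ∀ t : ℝ, 0 ≤ t → NormedSpace.exp (t • A) *ᵥ y ∈ V}
  add_mem' ha hb t ht := by rw [mulVec_add]; exact V.add_mem (ha t ht) (hb t ht)
  zero_mem' t _ := by rw [mulVec_zero]; exact V.zero_mem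
  smul_mem' c _ ha t ht := by rw [mulVec_smul]; exact V.smul_mem c (ha t ht)

variable {A : Matrix ι ι ℝ} {V : Submodule ℝ (ι → ℝ)}

theorem viabilityKernel_le : viabilityKernel A V ≤ V := fun y hy => by
  simpa using hy 0 le_rfl

theorem mulVec_mem_viabilityKernel {y : ι → ℝ} (hy : y ∈ viabilityKernel A V) :
    A *ᵥ y ∈ viabilityKernel A V := fun t ht =>
  (hasDerivAt_exp_smul_mulVec A y t).hasDerivWithinAt.mem_of_forall_le_mem
    V.closed_of_finiteDimensional fun s hs => hy s (ht.trans hs)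

end Matrix

/-- A trajectory `t ↦ e^{tA} x₀` of the linear system `ẋ = Ax` remains in a
subspace `V` for all `t ≥ 0` if and only if `x₀` lies in the maximal
`A`-invariant subspace `V*` contained in `V`. -/
theorem stays_in_subspace_iff_mem_maximal_invariant (n : ℕ)
    (A : Matrix (Fin n) (Fin n) ℝ)
    (V : Submodule ℝ (Fin n → ℝ))
    (Vstar : Submodule ℝ (Fin n → ℝ)) (hsub : Vstar ≤ V)
    (hinv : ∀ x ∈ Vstar, A.mulVec x ∈ Vstar)
    (hmax : ∀ W : Submodule ℝ (Fin n → ℝ), W ≤ V →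
      (∀ x ∈ W, A.mulVec x ∈ W) → W ≤ Vstar)
    (x₀ : Fin n → ℝ) :
    (∀ t : ℝ, 0 ≤ t → (NormedSpace.exp (t • A)).mulVec x₀ ∈ V) ↔ x₀ ∈ Vstar := by
  constructor
  · intro hx₀
    exact hmax (viabilityKernel A V) viabilityKernel_le (fun _ => mulVec_mem_viabilityKernel) hx₀
  · intro hx₀ t _
    refine hsub (exp_mulVec_mem Vstar.closed_of_finiteDimensional (fun x hx => ?_) hx₀)
    rw [smul_mulVec]
    exact Vstar.smul_mem t (hinv x hx)
end

section
/- Observability in the decomposition adapted to the maximal invariant subspace: let A ∈ ℝⁿˣⁿ, F ∈ ℝᵐˣⁿ full row rank, V = ker F, and V* the maximal A-invariant subspace in V. Choose an orthonormal basis T = [T₁; T₂; T₃]ᵀ of ℝⁿ with rows of T₁ spanning V* and rows of T₃ spanning the row space of F. Then the pair (T₃ A T₂ᵀ, T₂ A T₂ᵀ) is observable. -/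
/-!
Differentiating `t ↦ C exp(tM) z₀` repeatedly at `t = 0` puts `z₀` in the unobservable subspace
`U` of `(C, M) = (T₃AT₂ᵀ, T₂AT₂ᵀ)`, which is `M`-invariant and killed by `C`. Its image `T₂ᵀU`
lies in `ker T₃ ⊆ ker F`, and splitting `A T₂ᵀ y = T₁ᵀT₁AT₂ᵀy + T₂ᵀMy + T₃ᵀCy` shows that
`V* + T₂ᵀU` is `A`-invariant. By maximality `T₂ᵀU ⊆ V* = row space of T₁`, which is orthogonal to
the rows of `T₂`, so `U = 0`.
-/

open Matrix

open Submodule Set in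
theorem Matrix.ker_mulVecLin_le_of_span_row_le {R l m n : Type*} [CommRing R] [Fintype n]
    [Fintype m] {F : Matrix l n R} {G : Matrix m n R}
    (h : span R (range F.row) ≤ span R (range G.row)) :
    LinearMap.ker G.mulVecLin ≤ LinearMap.ker F.mulVecLin := by
  intro v hv
  rw [LinearMap.mem_ker, mulVecLin_apply] at hv ⊢
  funext i
  obtain ⟨x, hx⟩ : F i ∈ LinearMap.range G.vecMulLinear := by
    rw [range_vecMulLinear]
    exact h (subset_span ⟨i, rfl⟩)
  calc (F *ᵥ v) i = (x ᵥ* G) ⬝ᵥ v := by rw [← vecMulLinear_apply, hx]; rfl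
    _ = x ⬝ᵥ (G *ᵥ v) := (dotProduct_mulVec x G v).symm
    _ = 0 := by rw [hv, dotProduct_zero]

theorem Matrix.eq_zero_of_transpose_mulVec_mem_span_row {R p q n : Type*} [CommRing R]
    [Fintype n] [Fintype p] [Fintype q] [DecidableEq q] {T₁ : Matrix p n R}
    {T₂ : Matrix q n R} (h22 : T₂ * T₂ᵀ = 1) (h12 : T₁ * T₂ᵀ = 0) {y : q → R}
    (hy : T₂ᵀ *ᵥ y ∈ Submodule.span R (Set.range T₁.row)) : y = 0 := by
  rw [← col_transpose, ← range_mulVecLin] at hy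
  obtain ⟨x, hx⟩ := hy
  calc y = T₂ *ᵥ (T₂ᵀ *ᵥ y) := by rw [mulVec_mulVec, h22, one_mulVec]
    _ = (T₁ * T₂ᵀ)ᵀ *ᵥ x := by rw [← hx, mulVecLin_apply, mulVec_mulVec, transpose_mul,
        transpose_transpose]
    _ = 0 := by rw [h12, transpose_zero, zero_mulVec]

section Unobservable

variable {R m n : Type*} [CommRing R] [Fintype n] [DecidableEq n]

/-- The kernel of the observability matrix `[C; CM; CM²; …]`. -/
def Matrix.unobservableSubspace (C : Matrix m n R) (M : Matrix n n R) : Submodule R (n → R) :=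
  ⨅ k : ℕ, LinearMap.ker (C * M ^ k).mulVecLin

variable {C : Matrix m n R} {M : Matrix n n R} {y : n → R}

theorem Matrix.mem_unobservableSubspace :
    y ∈ C.unobservableSubspace M ↔ ∀ k : ℕ, C *ᵥ (M ^ k *ᵥ y) = 0 := by
  simp only [unobservableSubspace, Submodule.mem_iInf, LinearMap.mem_ker, mulVecLin_apply,
    mulVec_mulVec]

theorem Matrix.mulVec_eq_zero_of_mem_unobservableSubspace (hy : y ∈ C.unobservableSubspace M) :
    C *ᵥ y = 0 := by
  simpa using mem_unobservableSubspace.mp hy 0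

theorem Matrix.mulVec_mem_unobservableSubspace (hy : y ∈ C.unobservableSubspace M) :
    M *ᵥ y ∈ C.unobservableSubspace M :=
  mem_unobservableSubspace.mpr fun k => by
    rw [mulVec_mulVec y, ← pow_succ, mem_unobservableSubspace.mp hy]

end Unobservable

section Exponential

variable {𝕂 𝔸 E : Type*} [RCLike 𝕂] [NormedRing 𝔸] [NormedAlgebra 𝕂 𝔸] [CompleteSpace 𝔸]
  [NormedAddCommGroup E] [NormedSpace 𝕂 E]

theorem ContinuousLinearMap.map_mul_exp_smul_eq_zero (L : 𝔸 →L[𝕂] E) {x : 𝔸}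
    (h : ∀ t : 𝕂, L (NormedSpace.exp (t • x)) = 0) (t : 𝕂) :
    L (x * NormedSpace.exp (t • x)) = 0 := by
  have hderiv := L.hasFDerivAt.comp_hasDerivAt t (hasDerivAt_exp_smul_const' x t)
  have hconst : HasDerivAt (fun u : 𝕂 => L (NormedSpace.exp (u • x))) 0 t := by
    simpa only [h] using hasDerivAt_const t (0 : E)
  exact hderiv.unique hconst

theorem ContinuousLinearMap.map_pow_eq_zero_of_map_exp_smul_eq_zero (L : 𝔸 →L[𝕂] E) {x : 𝔸}
    (h : ∀ t : 𝕂, L (NormedSpace.exp (t • x)) = 0) (k : ℕ) : L (x ^ k) = 0 := by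
  induction k generalizing L with
  | zero => simpa using h 0
  | succ k ih =>
    rw [pow_succ']
    exact ih (L.comp (mul 𝕂 𝔸 x)) (L.map_mul_exp_smul_eq_zero h)

end Exponential

attribute [local instance] Matrix.linftyOpNormedRing Matrix.linftyOpNormedAlgebra in
theorem Matrix.mem_unobservableSubspace_of_mulVec_exp_mulVec_eq_zero {𝕂 m n : Type*} [RCLike 𝕂]
    [Fintype m] [Fintype n] [DecidableEq n] {C : Matrix m n 𝕂} {M : Matrix n n 𝕂} {z : n → 𝕂}
    (h : ∀ t : 𝕂, C *ᵥ (NormedSpace.exp (t • M) *ᵥ z) = 0) : z ∈ C.unobservableSubspace M := by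
  let L : Matrix n n 𝕂 →L[𝕂] m → 𝕂 :=
    LinearMap.toContinuousLinearMap (C.mulVecLin ∘ₗ (mulVecBilin 𝕂 𝕂).flip z)
  exact mem_unobservableSubspace.mpr (L.map_pow_eq_zero_of_map_exp_smul_eq_zero h ·)

section AdaptedBasis

open Submodule

variable {R n m o p q : Type*} [CommRing R] [Fintype n] [Fintype o] [Fintype p] [Fintype q]
  {A : Matrix n n R} {F : Matrix m n R} {Vstar : Submodule R (n → R)}
  {T₁ : Matrix p n R} {T₂ : Matrix q n R} {T₃ : Matrix o n R}

theorem Matrix.range_transpose_mulVecLin_le_ker (h23 : T₂ * T₃ᵀ = 0)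
    (hT3 : span R (Set.range F.row) ≤ span R (Set.range T₃.row)) :
    LinearMap.range T₂ᵀ.mulVecLin ≤ LinearMap.ker F.mulVecLin := by
  refine le_trans ?_ (ker_mulVecLin_le_of_span_row_le hT3)
  rw [LinearMap.range_le_ker_iff, ← mulVecLin_mul, ← transpose_transpose T₃,
    ← transpose_mul, h23, transpose_zero, mulVecLin_zero]

variable [DecidableEq n] [DecidableEq q]

theorem Matrix.mulVec_transpose_mulVec_mem_sup_map_unobservableSubspace
    (hcomplete : T₁ᵀ * T₁ + T₂ᵀ * T₂ + T₃ᵀ * T₃ = 1) (hT1 : span R (Set.range T₁.row) = Vstar)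
    {y : q → R} (hy : y ∈ (T₃ * A * T₂ᵀ).unobservableSubspace (T₂ * A * T₂ᵀ)) :
    A *ᵥ (T₂ᵀ *ᵥ y) ∈
      Vstar ⊔ ((T₃ * A * T₂ᵀ).unobservableSubspace (T₂ * A * T₂ᵀ)).map T₂ᵀ.mulVecLin := by
  have hdecomp (v : n → R) : v = T₁ᵀ *ᵥ (T₁ *ᵥ v) + T₂ᵀ *ᵥ (T₂ *ᵥ v) + T₃ᵀ *ᵥ (T₃ *ᵥ v) := by
    rw [mulVec_mulVec, mulVec_mulVec, mulVec_mulVec, ← add_mulVec, ← add_mulVec, hcomplete,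
      one_mulVec]
  set x := A *ᵥ (T₂ᵀ *ᵥ y)
  have hT₂x : T₂ *ᵥ x = (T₂ * A * T₂ᵀ) *ᵥ y := by simp only [x, mulVec_mulVec, Matrix.mul_assoc]
  have hT₃x : T₃ *ᵥ x = 0 := by
    rw [← mulVec_eq_zero_of_mem_unobservableSubspace hy]
    simp only [x, mulVec_mulVec, Matrix.mul_assoc]
  have hVstar : T₁ᵀ *ᵥ (T₁ *ᵥ x) ∈ Vstar := by
    rw [← hT1, ← col_transpose, ← range_mulVecLin]
    exact LinearMap.mem_range_self _ _
  rw [hdecomp x, hT₂x, hT₃x, mulVec_zero, add_zero]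
  exact add_mem (mem_sup_left hVstar)
    (mem_sup_right (mem_map_of_mem (mulVec_mem_unobservableSubspace hy)))

theorem Matrix.unobservableSubspace_eq_bot_of_adaptedBasis
    (hsub : Vstar ≤ LinearMap.ker F.mulVecLin) (hinv : ∀ x ∈ Vstar, A *ᵥ x ∈ Vstar)
    (hmax : ∀ W : Submodule R (n → R), W ≤ LinearMap.ker F.mulVecLin →
      (∀ x ∈ W, A *ᵥ x ∈ W) → W ≤ Vstar)
    (h22 : T₂ * T₂ᵀ = 1) (h12 : T₁ * T₂ᵀ = 0) (h23 : T₂ * T₃ᵀ = 0)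
    (hcomplete : T₁ᵀ * T₁ + T₂ᵀ * T₂ + T₃ᵀ * T₃ = 1) (hT1 : span R (Set.range T₁.row) = Vstar)
    (hT3 : span R (Set.range F.row) ≤ span R (Set.range T₃.row)) :
    (T₃ * A * T₂ᵀ).unobservableSubspace (T₂ * A * T₂ᵀ) = ⊥ := by
  set U := (T₃ * A * T₂ᵀ).unobservableSubspace (T₂ * A * T₂ᵀ)
  have hW : Vstar ⊔ U.map T₂ᵀ.mulVecLin ≤ Vstar := by
    refine hmax _ (sup_le hsub (LinearMap.map_le_range.trans
      (range_transpose_mulVecLin_le_ker h23 hT3))) fun x hx => ?_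
    obtain ⟨v, hv, _, ⟨y, hy, rfl⟩, rfl⟩ := mem_sup.mp hx
    rw [mulVec_add]
    exact add_mem (mem_sup_left (hinv v hv))
      (mulVec_transpose_mulVec_mem_sup_map_unobservableSubspace hcomplete hT1 hy)
  refine eq_bot_iff.mpr fun y hy => (mem_bot R).mpr ?_
  exact eq_zero_of_transpose_mulVec_mem_span_row h22 h12
    (hT1 ▸ hW (mem_sup_right (mem_map_of_mem hy)))

end AdaptedBasis

theorem observable_pair_in_adapted_basis_general (n m r : ℕ)
    (A : Matrix (Fin n) (Fin n) ℝ) (F : Matrix (Fin m) (Fin n) ℝ)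
    (V : Submodule ℝ (Fin n → ℝ)) (hV : V = LinearMap.ker F.mulVecLin)
    (Vstar : Submodule ℝ (Fin n → ℝ)) (hsub : Vstar ≤ V)
    (hinv : ∀ x ∈ Vstar, A.mulVec x ∈ Vstar)
    (hmax : ∀ W : Submodule ℝ (Fin n → ℝ), W ≤ V →
      (∀ x ∈ W, A.mulVec x ∈ W) → W ≤ Vstar)
    (T₁ : Matrix (Fin r) (Fin n) ℝ)
    (T₂ : Matrix (Fin (n - m - r)) (Fin n) ℝ)
    (T₃ : Matrix (Fin m) (Fin n) ℝ)
    -- orthonormality of the rows of the stacked matrix `T = [T₁; T₂; T₃]`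
    (h22 : T₂ * T₂ᵀ = 1) (h12 : T₁ * T₂ᵀ = 0) (h23 : T₂ * T₃ᵀ = 0)
    (hcomplete : T₁ᵀ * T₁ + T₂ᵀ * T₂ + T₃ᵀ * T₃ = 1)
    -- the rows of `T₁` span `V*` and the rows of `T₃` span the row space of `F`
    (hT1 : Submodule.span ℝ (Set.range fun i => T₁ i) = Vstar)
    (hT3 : Submodule.span ℝ (Set.range fun i => T₃ i)
      = Submodule.span ℝ (Set.range fun i => F i)) :
    ∀ z₀ : Fin (n - m - r) → ℝ,
      (∀ t : ℝ, (T₃ * A * T₂ᵀ).mulVec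
        ((NormedSpace.exp (t • (T₂ * A * T₂ᵀ))).mulVec z₀) = 0) → z₀ = 0 := by
  subst hV
  intro z₀ hz
  have hunobs : z₀ ∈ (T₃ * A * T₂ᵀ).unobservableSubspace (T₂ * A * T₂ᵀ) :=
    mem_unobservableSubspace_of_mulVec_exp_mulVec_eq_zero hz
  rwa [unobservableSubspace_eq_bot_of_adaptedBasis hsub hinv hmax h22 h12 h23 hcomplete hT1
    hT3.ge, Submodule.mem_bot] at hunobs

/-- Observability in the decomposition adapted to the maximal invariant
subspace: with `V = ker F`, `V*` the maximal `A`-invariant subspace in `V`,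
and an orthonormal basis `[T₁; T₂; T₃]` of `ℝⁿ` whose first block spans `V*`
and last block spans the row space of `F`, the pair
`(T₃ A T₂ᵀ, T₂ A T₂ᵀ)` is observable: the only trajectory `ż = T₂AT₂ᵀ z` with
`T₃AT₂ᵀ z(t) ≡ 0` is `z ≡ 0`. -/
theorem observable_pair_in_adapted_basis (n m r : ℕ)
    (A : Matrix (Fin n) (Fin n) ℝ) (F : Matrix (Fin m) (Fin n) ℝ)
    (hF : F.rank = m)
    (V : Submodule ℝ (Fin n → ℝ)) (hV : V = LinearMap.ker F.mulVecLin)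
    (Vstar : Submodule ℝ (Fin n → ℝ)) (hsub : Vstar ≤ V)
    (hinv : ∀ x ∈ Vstar, A.mulVec x ∈ Vstar)
    (hmax : ∀ W : Submodule ℝ (Fin n → ℝ), W ≤ V →
      (∀ x ∈ W, A.mulVec x ∈ W) → W ≤ Vstar)
    (T₁ : Matrix (Fin r) (Fin n) ℝ)
    (T₂ : Matrix (Fin (n - m - r)) (Fin n) ℝ)
    (T₃ : Matrix (Fin m) (Fin n) ℝ)
    -- orthonormality of the rows of the stacked matrix `T = [T₁; T₂; T₃]`
    (h11 : T₁ * T₁ᵀ = 1) (h22 : T₂ * T₂ᵀ = 1) (h33 : T₃ * T₃ᵀ = 1)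
    (h12 : T₁ * T₂ᵀ = 0) (h13 : T₁ * T₃ᵀ = 0) (h23 : T₂ * T₃ᵀ = 0)
    (hcomplete : T₁ᵀ * T₁ + T₂ᵀ * T₂ + T₃ᵀ * T₃ = 1)
    -- the rows of `T₁` span `V*` and the rows of `T₃` span the row space of `F`
    (hT1 : Submodule.span ℝ (Set.range fun i => T₁ i) = Vstar)
    (hT3 : Submodule.span ℝ (Set.range fun i => T₃ i)
      = Submodule.span ℝ (Set.range fun i => F i)) :
    ∀ z₀ : Fin (n - m - r) → ℝ,
      (∀ t : ℝ, (T₃ * A * T₂ᵀ).mulVec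
        ((NormedSpace.exp (t • (T₂ * A * T₂ᵀ))).mulVec z₀) = 0) → z₀ = 0 :=
  observable_pair_in_adapted_basis_general n m r A F V hV Vstar hsub hinv hmax T₁ T₂ T₃ h22 h12 h23
    hcomplete hT1 hT3
end
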